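/- Let p be an odd prime and let t be a rational number whose numerator and denominator are both coprime to p. Then Σ_{k=0}^{(p-3)/2} (binom(2k,k)/(2k+1)²)·(t/4)^{2k} ≡ (−1)^{(p-1)/2}·(v_p(t) − t^p)/(t·p²) + (2/(t·p))·Σ_{k=0}^{(p-3)/2} (−1)^k·v_{2k+1}(t)/(2k+1) (mod p²). -/

import Mathlib

/-- `x ≡ y (mod p^m)` for rationals: the `p`-adic valuation of `x - y` is at least `m`
(with the convention that `x = y` always satisfies the congruence). -/
def pcong (p m : ℕ) (x y : ℚ) : Prop := x = y ∨ (m : ℤ) ≤ padicValRat p (x - y)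

/-- Lucas sequence `v_n(x)`: `v_0 = 2`, `v_1 = x`, `v_n = x v_{n-1} - v_{n-2}`. -/
def lucasV (x : ℚ) : ℕ → ℚ
  | 0 => 2
  | 1 => x
  | n + 2 => x * lucasV x (n + 1) - lucasV x n

/-!
Write `p = 2m + 1`. Expanding `v_{2k+1}(t)` in powers of `t` and summing over `k`, the right-hand
side is exactly `∑_{k<m} (-1)^k C(m+k, 2k) t^(2k) / (2k+1)^2`. The congruence then holds termwise:
`(-1)^k C(m+k, 2k) · 4^k (2k)! = ∏_{i<k} ((2i+1)^2 - p^2)` is congruent modulo `p^2` to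
`∏_{i<k} (2i+1)^2 = C(2k, k) / 16^k · 4^k (2k)!`, and `4^k (2k)!`, `2k + 1` and `t` are
`p`-adic units.
-/

open Finset
open scoped Nat

-- The absolute values of the coefficients of `t ^ (2d+1)` in `u_{2k+2}` and `u_{2k}`, which add up
-- in `v_{2k+1} = u_{2k+2} - u_{2k}`.
def oddLucasCoeff (k d : ℕ) : ℕ := (k + d + 1).choose (2 * d + 1) + (k + d).choose (2 * d + 1)

theorem oddLucasCoeff_eq_zero {k d : ℕ} (h : k < d) : oddLucasCoeff k d = 0 := by
  rw [oddLucasCoeff, Nat.choose_eq_zero_of_lt (by omega), Nat.choose_eq_zero_of_lt (by omega)]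

theorem oddLucasCoeff_zero_right (k : ℕ) : oddLucasCoeff k 0 = 2 * k + 1 := by
  simp only [oddLucasCoeff, add_zero, mul_zero, zero_add, Nat.choose_one_right]
  ring

theorem choose_add_two_add_choose (n r : ℕ) :
    (n + 2).choose (r + 2) + n.choose (r + 2) = 2 * (n + 1).choose (r + 2) + n.choose r := by
  have h₁ : (n + 2).choose (r + 2) = (n + 1).choose (r + 1) + (n + 1).choose (r + 2) :=
    Nat.choose_succ_succ' _ _
  have h₂ : (n + 1).choose (r + 2) = n.choose (r + 1) + n.choose (r + 2) :=
    Nat.choose_succ_succ' _ _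
  have h₃ := Nat.choose_succ_succ' n r
  omega

theorem oddLucasCoeff_add_two (k d : ℕ) :
    oddLucasCoeff (k + 2) (d + 1) + oddLucasCoeff k (d + 1)
      = 2 * oddLucasCoeff (k + 1) (d + 1) + oddLucasCoeff (k + 1) d := by
  have h₁ := choose_add_two_add_choose (k + d + 2) (2 * d + 1)
  have h₂ := choose_add_two_add_choose (k + d + 1) (2 * d + 1)
  simp only [oddLucasCoeff]
  ring_nf at h₁ h₂ ⊢
  omega

theorem lucasV_odd_add_two (x : ℚ) (k : ℕ) :
    lucasV x (2 * (k + 2) + 1)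
      = (x ^ 2 - 2) * lucasV x (2 * (k + 1) + 1) - lucasV x (2 * k + 1) := by
  rw [show 2 * (k + 2) + 1 = 2 * k + 3 + 2 by ring, show 2 * (k + 1) + 1 = 2 * k + 1 + 2 by ring,
    lucasV, lucasV, show 2 * k + 3 = 2 * k + 1 + 2 by ring, lucasV]
  ring

theorem neg_one_pow_mul_lucasV_odd (t : ℚ) (k N : ℕ) (hN : k < N) :
    (-1) ^ k * lucasV t (2 * k + 1)
      = ∑ d ∈ range N, (-1) ^ d * (oddLucasCoeff k d : ℚ) * t ^ (2 * d + 1) := by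
  induction k using Nat.twoStepInduction generalizing N with
  | zero =>
    rw [sum_eq_single_of_mem 0 (mem_range.2 hN) fun d _ hd => by
      rw [oddLucasCoeff_eq_zero (Nat.pos_of_ne_zero hd)]; simp]
    simp [lucasV, oddLucasCoeff]
  | one =>
    rw [← sum_subset (range_subset_range.2 hN) fun d _ hd => by
      rw [oddLucasCoeff_eq_zero (by simpa using hd)]; simp]
    simp [lucasV, oddLucasCoeff, sum_range_succ]
    ring
  | more k ih₀ ih₁ =>
    obtain ⟨n, rfl⟩ : ∃ n, N = n + 1 := ⟨N - 1, by omega⟩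
    have hstep : ∀ d,
        (-1) ^ (d + 1) * (oddLucasCoeff (k + 2) (d + 1) : ℚ) * t ^ (2 * (d + 1) + 1)
          = 2 * ((-1) ^ (d + 1) * (oddLucasCoeff (k + 1) (d + 1) : ℚ) * t ^ (2 * (d + 1) + 1))
          - t ^ 2 * ((-1) ^ d * (oddLucasCoeff (k + 1) d : ℚ) * t ^ (2 * d + 1))
          - (-1) ^ (d + 1) * (oddLucasCoeff k (d + 1) : ℚ) * t ^ (2 * (d + 1) + 1) := by
      intro d
      have h : (oddLucasCoeff (k + 2) (d + 1) : ℚ) = 2 * oddLucasCoeff (k + 1) (d + 1)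
          + oddLucasCoeff (k + 1) d - oddLucasCoeff k (d + 1) := by
        rw [eq_sub_iff_add_eq]; exact_mod_cast oddLucasCoeff_add_two k d
      rw [h]; ring
    calc (-1) ^ (k + 2) * lucasV t (2 * (k + 2) + 1)
        = 2 * ((-1) ^ (k + 1) * lucasV t (2 * (k + 1) + 1))
          - t ^ 2 * ((-1) ^ (k + 1) * lucasV t (2 * (k + 1) + 1))
          - (-1) ^ k * lucasV t (2 * k + 1) := by rw [lucasV_odd_add_two]; ring
      _ = 2 * ∑ d ∈ range (n + 1), (-1) ^ d * (oddLucasCoeff (k + 1) d : ℚ) * t ^ (2 * d + 1)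
          - t ^ 2 * ∑ d ∈ range n, (-1) ^ d * (oddLucasCoeff (k + 1) d : ℚ) * t ^ (2 * d + 1)
          - ∑ d ∈ range (n + 1), (-1) ^ d * (oddLucasCoeff k d : ℚ) * t ^ (2 * d + 1) := by
        rw [← ih₁ (n + 1) (by omega), ← ih₁ n (by omega), ← ih₀ (n + 1) (by omega)]
      _ = _ := by
        simp only [sum_range_succ' _ n, sum_congr rfl fun d _ => hstep d, sum_sub_distrib,
          ← mul_sum, oddLucasCoeff_zero_right]
        push_cast
        ring

theorem two_mul_add_one_mul_oddLucasCoeff (k d : ℕ) :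
    (2 * d + 1 : ℚ) * oddLucasCoeff k d = (2 * k + 1) * (k + d).choose (2 * d) := by
  rcases lt_or_ge k d with h | h
  · rw [oddLucasCoeff_eq_zero h, Nat.choose_eq_zero_of_lt (by omega)]
    simp
  obtain ⟨j, rfl⟩ : ∃ j, k = d + j := ⟨k - d, by omega⟩
  have h₁ := Nat.add_one_mul_choose_eq (d + j + d) (2 * d)
  have h₂ := Nat.choose_succ_right_eq (d + j + d) (2 * d)
  rw [show d + j + d - 2 * d = j by omega] at h₂
  qify at h₁ h₂
  simp only [oddLucasCoeff]
  push_cast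
  linear_combination h₂ - h₁

theorem neg_one_pow_mul_lucasV_odd_div (t : ℚ) (k N : ℕ) (hN : k < N) :
    (-1) ^ k * lucasV t (2 * k + 1) / (2 * k + 1)
      = ∑ d ∈ range N,
          (-1) ^ d * ((k + d).choose (2 * d) : ℚ) / (2 * d + 1) * t ^ (2 * d + 1) := by
  rw [neg_one_pow_mul_lucasV_odd t k N hN, sum_div]
  refine sum_congr rfl fun d _ => ?_
  have h := two_mul_add_one_mul_oddLucasCoeff k d
  field_simp
  linear_combination t ^ (2 * d + 1) * h

theorem lucasV_odd_add_two_mul_sum_lucasV_odd (t : ℚ) (m : ℕ) :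
    (-1) ^ m * lucasV t (2 * m + 1) / (2 * m + 1)
        + 2 * ∑ k ∈ range m, (-1) ^ k * lucasV t (2 * k + 1) / (2 * k + 1)
      = (2 * m + 1) * ∑ d ∈ range (m + 1),
          (-1) ^ d * ((m + d).choose (2 * d) : ℚ) * t ^ (2 * d + 1) / (2 * d + 1) ^ 2 := by
  induction m with
  | zero => simp [lucasV]
  | succ m ih =>
    have hext : ∑ d ∈ range (m + 2),
          (-1) ^ d * ((m + d).choose (2 * d) : ℚ) * t ^ (2 * d + 1) / (2 * d + 1) ^ 2
        = ∑ d ∈ range (m + 1),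
          (-1) ^ d * ((m + d).choose (2 * d) : ℚ) * t ^ (2 * d + 1) / (2 * d + 1) ^ 2 := by
      rw [sum_range_succ _ (m + 1), Nat.choose_eq_zero_of_lt (by omega)]
      simp
    calc _ = (-1) ^ (m + 1) * lucasV t (2 * (m + 1) + 1) / (2 * ↑(m + 1) + 1)
          + (-1) ^ m * lucasV t (2 * m + 1) / (2 * m + 1)
          + ((-1) ^ m * lucasV t (2 * m + 1) / (2 * m + 1)
            + 2 * ∑ k ∈ range m, (-1) ^ k * lucasV t (2 * k + 1) / (2 * k + 1)) := by
          rw [sum_range_succ]; ring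
      _ = _ := by
        rw [ih, ← hext, neg_one_pow_mul_lucasV_odd_div t (m + 1) (m + 2) (by omega),
          neg_one_pow_mul_lucasV_odd_div t m (m + 2) (by omega), mul_sum, mul_sum,
          ← sum_add_distrib, ← sum_add_distrib]
        refine sum_congr rfl fun d hd => ?_
        have h := Nat.choose_mul_succ_eq (m + d) (2 * d)
        rw [show m + d + 1 - 2 * d = m + 1 - d by omega] at h
        qify [show d ≤ m + 1 from by simpa [Nat.lt_succ_iff] using hd] at h
        rw [show m + 1 + d = m + d + 1 by ring]
        field_simp
        push_cast
        linear_combination 2 * t ^ (2 * d + 1) * h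

theorem lucasV_combination_eq_sum (t : ℚ) (ht : t ≠ 0) (m : ℕ) :
    (-1) ^ m * (lucasV t (2 * m + 1) - t ^ (2 * m + 1)) / (t * (2 * m + 1) ^ 2)
        + 2 / (t * (2 * m + 1)) * ∑ k ∈ range m, (-1) ^ k * lucasV t (2 * k + 1) / (2 * k + 1)
      = ∑ k ∈ range m,
          (-1) ^ k * ((m + k).choose (2 * k) : ℚ) * t ^ (2 * k) / (2 * k + 1) ^ 2 := by
  have h := lucasV_odd_add_two_mul_sum_lucasV_odd t m
  have hsum : ∑ d ∈ range m,
        (-1) ^ d * ((m + d).choose (2 * d) : ℚ) * t ^ (2 * d + 1) / (2 * d + 1) ^ 2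
      = t * ∑ k ∈ range m,
          (-1) ^ k * ((m + k).choose (2 * k) : ℚ) * t ^ (2 * k) / (2 * k + 1) ^ 2 := by
    rw [mul_sum]
    refine sum_congr rfl fun d _ => ?_
    ring
  rw [sum_range_succ, hsum, ← two_mul, Nat.choose_self, Nat.cast_one] at h
  field_simp at h ⊢
  linear_combination h

theorem two_mul_choose_div_sixteen_pow_mul_eq_prod (k : ℕ) :
    ((2 * k).choose k : ℚ) / 16 ^ k * (4 ^ k * (2 * k)!)
      = ∏ i ∈ range k, (2 * (i : ℚ) + 1) ^ 2 := by
  induction k with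
  | zero => simp
  | succ k ih =>
    have h := Nat.succ_mul_centralBinom_succ k
    simp only [Nat.centralBinom_eq_two_mul_choose] at h
    qify at h
    have hC :
        ((2 * (k + 1)).choose (k + 1) : ℚ) = 2 * (2 * k + 1) * (2 * k).choose k / (k + 1) := by
      rw [eq_div_iff (by positivity), ← h]; ring
    rw [prod_range_succ, ← ih, hC, show 2 * (k + 1) = 2 * k + 1 + 1 by ring, Nat.factorial_succ,
      Nat.factorial_succ, pow_succ, pow_succ]
    push_cast
    field_simp
    ring

theorem neg_one_pow_mul_choose_mul_eq_prod (m k : ℕ) (hk : k ≤ m) :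
    (-1) ^ k * ((m + k).choose (2 * k) : ℚ) * (4 ^ k * (2 * k)!)
      = ∏ i ∈ range k, ((2 * (i : ℚ) + 1) ^ 2 - (2 * m + 1) ^ 2) := by
  induction k with
  | zero => simp
  | succ k ih =>
    have h₁ := Nat.add_one_mul_choose_eq (m + k) (2 * k + 1)
    have h₂ := Nat.choose_succ_right_eq (m + k) (2 * k)
    rw [show m + k - 2 * k = m - k by omega] at h₂
    qify [show k ≤ m by omega] at h₁ h₂
    rw [prod_range_succ, ← ih (by omega), show 2 * (k + 1) = 2 * k + 1 + 1 by ring,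
      Nat.factorial_succ, Nat.factorial_succ, show m + (k + 1) = m + k + 1 by ring]
    push_cast
    linear_combination
      (-1) ^ k * 4 ^ (k + 1) * ((2 * k)! : ℚ) * ((2 * k + 1) * h₁ - (m + k + 1) * h₂)

theorem Int.dvd_prod_sub_prod_sub {ι : Type*} (s : Finset ι) (a : ι → ℤ) (n : ℤ) :
    n ∣ ∏ i ∈ s, a i - ∏ i ∈ s, (a i - n) :=
  (Int.ModEq.prod fun i _ => Int.modEq_iff_dvd.2 ⟨1, by ring⟩).dvd

theorem padicNorm_two_mul_choose_div_sixteen_pow_sub_le (p m k : ℕ) [hp : Fact p.Prime]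
    (hpm : p = 2 * m + 1) (hk : k < m) :
    padicNorm p (((2 * k).choose k : ℚ) / 16 ^ k - (-1) ^ k * ((m + k).choose (2 * k) : ℚ))
      ≤ (p : ℚ) ^ (-2 : ℤ) := by
  have hD : ¬ p ∣ 4 ^ k * (2 * k)! := by
    rw [hp.out.dvd_mul, show 4 ^ k = 2 ^ (2 * k) by rw [pow_mul]; rfl, hp.out.dvd_factorial]
    rintro (h | h)
    · exact absurd (Nat.le_of_dvd two_pos (hp.out.dvd_of_dvd_pow h)) (by omega)
    · omega
  have hz := Int.dvd_prod_sub_prod_sub (range k) (fun i => (2 * i + 1 : ℤ) ^ 2) ((p : ℤ) ^ 2)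
  have key : ((2 * k).choose k : ℚ) / 16 ^ k - (-1) ^ k * ((m + k).choose (2 * k) : ℚ)
      = ((∏ i ∈ range k, (2 * i + 1 : ℤ) ^ 2
            - ∏ i ∈ range k, ((2 * i + 1 : ℤ) ^ 2 - (p : ℤ) ^ 2) : ℤ) : ℚ)
        / ((4 ^ k * (2 * k)! : ℕ) : ℚ) := by
    rw [eq_div_iff (by positivity), sub_mul, Nat.cast_mul, Nat.cast_pow, Nat.cast_ofNat,
      two_mul_choose_div_sixteen_pow_mul_eq_prod, neg_one_pow_mul_choose_mul_eq_prod m k hk.le, hpm]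
    push_cast
    ring
  rw [key, padicNorm.div, (padicNorm.nat_eq_one_iff _).2 hD, div_one]
  exact padicNorm.dvd_iff_norm_le.1 (by exact_mod_cast hz)

theorem pcong_of_padicNorm_sub_le {p n : ℕ} [hp : Fact p.Prime] {x y : ℚ}
    (h : padicNorm p (x - y) ≤ (p : ℚ) ^ (-(n : ℤ))) : pcong p n x y := by
  rcases eq_or_ne x y with hxy | hxy
  · exact Or.inl hxy
  rw [padicNorm.eq_zpow_of_nonzero (sub_ne_zero.2 hxy),
    zpow_le_zpow_iff_right₀ (by exact_mod_cast hp.out.one_lt)] at h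
  exact Or.inr (by omega)

theorem padicNorm_eq_one_of_not_dvd {p : ℕ} [Fact p.Prime] {t : ℚ}
    (hnum : ¬ (p : ℤ) ∣ t.num) (hden : ¬ (p : ℤ) ∣ (t.den : ℤ)) :
    padicNorm p t = 1 := by
  rw [← Rat.num_div_den t, padicNorm.div, (padicNorm.int_eq_one_iff _).2 hnum,
    (padicNorm.nat_eq_one_iff _).2 (by exact_mod_cast hden), div_one]

theorem padicNorm_summand_sub_le (p m k : ℕ) [Fact p.Prime] (hpm : p = 2 * m + 1) (hk : k < m)
    {t : ℚ} (ht : padicNorm p t = 1) :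
    padicNorm p (((2 * k).choose k : ℚ) / (2 * k + 1) ^ 2 * (t / 4) ^ (2 * k)
        - (-1) ^ k * ((m + k).choose (2 * k) : ℚ) * t ^ (2 * k) / (2 * k + 1) ^ 2)
      ≤ (p : ℚ) ^ (-2 : ℤ) := by
  have hunit : ¬ p ∣ (2 * k + 1) ^ 2 := fun h =>
    absurd (Nat.le_of_dvd (by positivity) ((Fact.out : p.Prime).dvd_of_dvd_pow h)) (by omega)
  have hsummand : ((2 * k).choose k : ℚ) / (2 * k + 1) ^ 2 * (t / 4) ^ (2 * k)
        - (-1) ^ k * ((m + k).choose (2 * k) : ℚ) * t ^ (2 * k) / (2 * k + 1) ^ 2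
      = (((2 * k).choose k : ℚ) / 16 ^ k - (-1) ^ k * ((m + k).choose (2 * k) : ℚ))
        * t ^ (2 * k) / (((2 * k + 1) ^ 2 : ℕ) : ℚ) := by
    rw [div_pow, show (4 : ℚ) ^ (2 * k) = 16 ^ k by rw [pow_mul]; norm_num]
    push_cast
    ring
  rw [hsummand, padicNorm.div, padicNorm.mul, IsAbsoluteValue.abv_pow (padicNorm p), ht, one_pow,
    mul_one, (padicNorm.nat_eq_one_iff _).2 hunit, div_one]
  exact padicNorm_two_mul_choose_div_sixteen_pow_sub_le p m k hpm hk

theorem stmt16 (p : ℕ) (hp : p.Prime) (hodd : Odd p) (t : ℚ)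
    (hnum : ¬ (p : ℤ) ∣ t.num) (hden : ¬ (p : ℤ) ∣ (t.den : ℤ)) :
    pcong p 2
      (∑ k ∈ Finset.range ((p - 1) / 2),
        (Nat.choose (2 * k) k : ℚ) / (2 * (k : ℚ) + 1) ^ 2 * (t / 4) ^ (2 * k))
      ((-1 : ℚ) ^ ((p - 1) / 2) * (lucasV t p - t ^ p) / (t * (p : ℚ) ^ 2)
        + (2 / (t * p)) *
          ∑ k ∈ Finset.range ((p - 1) / 2),
            (-1 : ℚ) ^ k * lucasV t (2 * k + 1) / (2 * (k : ℚ) + 1)) := by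
  have := Fact.mk hp
  obtain ⟨m, rfl⟩ := hodd
  have ht := padicNorm_eq_one_of_not_dvd hnum hden
  have ht₀ : t ≠ 0 := by rintro rfl; simp at ht
  rw [show (2 * m + 1 - 1) / 2 = m by omega,
    show ((2 * m + 1 : ℕ) : ℚ) = 2 * m + 1 by push_cast; ring,
    lucasV_combination_eq_sum t ht₀ m]
  refine pcong_of_padicNorm_sub_le ?_
  rw [← sum_sub_distrib]
  exact padicNorm.sum_le' (fun k hk => padicNorm_summand_sub_le _ m k rfl (mem_range.1 hk) ht)
    (by positivity)
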